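/- In the separating instance with m = 2^k instantiations (k ≥ 2, all attributes binary) and one bidder per instantiation — where bidder ω values only instantiation ω, at m/2 if ω is the all-zeros or the all-ones instantiation and at 1 otherwise — the maximum of ∑_{B ∈ F} 2(B) over all finite families F of pairwise disjoint nonempty subsets of Ω (arbitrary clustering, bundles need not be natural) equals m − 1. In particular, the maximum is attained by bundling the all-zeros and all-ones instantiations together (contributing m/2) and pairing up the remaining m − 2 instantiations (contributing 1 each). -/
import Mathlib


/-- The instantiation space: `k` binary attributes. -/
abbrev Om (k : ℕ) := Fin k → Fin 2

/-- Bidder `ω`'s valuation of instantiation `ω`: `m / 2 = 2 ^ k / 2` if `ω` is the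
all-zeros or the all-ones instantiation and `1` otherwise. -/
noncomputable def val (k : ℕ) (ω : Om k) : ℝ :=
  if ω = (fun _ => 0) ∨ ω = (fun _ => 1) then (2 ^ k : ℝ) / 2 else 1

/-- There is one bidder per instantiation: bidder `ω` values only instantiation `ω`. -/
noncomputable def v (k : ℕ) (ω ω' : Om k) : ℝ := if ω' = ω then val k ω else 0

/-- Bidder `ω`'s (additive) value for a set of instantiations. -/
noncomputable def Vv (k : ℕ) (ω : Om k) (B : Finset (Om k)) : ℝ := ∑ x ∈ B, v k ω x

/-- The pairs of distinct bidders. -/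
def pairsO (k : ℕ) : Finset (Om k × Om k) := Finset.univ.filter fun p => p.1 ≠ p.2

theorem pairsO_nonempty {k : ℕ} (hk : 1 ≤ k) : (pairsO k).Nonempty := by
  refine ⟨((fun _ => 0), (fun _ => 1)), ?_⟩
  simp only [pairsO, Finset.mem_filter, Finset.mem_univ, true_and]
  intro h
  simpa using congrFun h ⟨0, by omega⟩

/-- The second price of a set of instantiations: the max over pairs of distinct bidders
of the min of the two bidders' values for the set. -/
noncomputable def sp {k : ℕ} (hk : 2 ≤ k) (B : Finset (Om k)) : ℝ :=
  (pairsO k).sup' (pairsO_nonempty (by omega))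
    fun p => min (Vv k p.1 B) (Vv k p.2 B)

-- auxiliary
lemma Vv_eq {k : ℕ} (ω : Om k) (B : Finset (Om k)) :
    Vv k ω B = if ω ∈ B then val k ω else 0 := by
  classical
  simp [Vv, v, Finset.sum_ite_eq']

lemma one_le_half {k : ℕ} (hk : 2 ≤ k) : (1:ℝ) ≤ (2:ℝ)^k / 2 := by
  have : (2:ℝ)^2 ≤ (2:ℝ)^k := pow_le_pow_right₀ one_le_two hk
  norm_num at this ⊢
  linarith

lemma val_pos {k : ℕ} (ω : Om k) : 0 < val k ω := by
  unfold val; split <;> positivity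

lemma val_le {k : ℕ} (hk : 2 ≤ k) (ω : Om k) : val k ω ≤ (2:ℝ)^k / 2 := by
  unfold val; split
  · exact le_rfl
  · exact one_le_half hk

lemma val_nonspecial {k : ℕ} {ω : Om k} (h0 : ω ≠ fun _ => 0) (h1 : ω ≠ fun _ => 1) :
    val k ω = 1 := by
  unfold val
  rw [if_neg]
  tauto

lemma sp_le {k : ℕ} (hk : 2 ≤ k) (B : Finset (Om k)) :
    sp hk B ≤ ((2:ℝ)^k/2 - 1) * (if ((fun _ => 0) ∈ B ∧ (fun _ => 1) ∈ B) then 1 else 0)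
      + (B.card : ℝ)/2 := by
  classical
  have h1 : (1:ℝ) ≤ (2:ℝ)^k/2 := one_le_half hk
  have hind : (0:ℝ) ≤ (if ((fun _ => 0) ∈ B ∧ (fun _ => 1) ∈ B) then (1:ℝ) else 0) := by
    split <;> norm_num
  have hRHS : (0:ℝ) ≤ ((2:ℝ)^k/2 - 1) * (if ((fun _ => 0) ∈ B ∧ (fun _ => 1) ∈ B) then 1 else 0)
      + (B.card : ℝ)/2 := by
    have : (0:ℝ) ≤ (B.card : ℝ)/2 := by positivity
    nlinarith
  apply Finset.sup'_le
  rintro ⟨a, b⟩ hp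
  have hab : a ≠ b := by simpa [pairsO] using hp
  rw [Vv_eq, Vv_eq]
  by_cases ha : a ∈ B
  · by_cases hb : b ∈ B
    · rw [if_pos ha, if_pos hb]
      have hcard : 2 ≤ B.card := Finset.one_lt_card.mpr ⟨a, ha, b, hb, hab⟩
      have hcard' : (1:ℝ) ≤ (B.card : ℝ)/2 := by
        have : (2:ℝ) ≤ (B.card : ℝ) := by exact_mod_cast hcard
        linarith
      by_cases hs : (a = (fun _ => 0) ∨ a = (fun _ => 1)) ∧ (b = (fun _ => 0) ∨ b = (fun _ => 1))
      · have hz : ((fun _ => 0) : Om k) ∈ B ∧ ((fun _ => 1) : Om k) ∈ B := by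
          obtain ⟨hA, hB⟩ := hs
          rcases hA with rfl | rfl <;> rcases hB with h | h <;>
            first
              | exact absurd h.symm hab.symm ▸ (by tauto)
              | constructor <;> simp_all
        rw [if_pos hz]
        have hmin : min (val k a) (val k b) ≤ (2:ℝ)^k/2 :=
          le_trans (min_le_left _ _) (val_le hk a)
        linarith
      · have hmin : min (val k a) (val k b) ≤ 1 := by
          rw [not_and_or] at hs
          rcases hs with hs | hs
          · exact le_trans (min_le_left _ _) (by unfold val; rw [if_neg hs])
          · exact le_trans (min_le_right _ _) (by unfold val; rw [if_neg hs])
        nlinarith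
    · rw [if_neg hb]
      exact le_trans (min_le_right _ _) hRHS
  · rw [if_neg ha]
    exact le_trans (min_le_left _ _) hRHS

lemma sp_pair {k : ℕ} (hk : 2 ≤ k) {a b : Om k} (hab : a ≠ b) :
    sp hk ({a, b} : Finset (Om k)) = min (val k a) (val k b) := by
  classical
  have hmem : ∀ x : Om k, x ∈ ({a, b} : Finset (Om k)) ↔ x = a ∨ x = b := by
    intro x; simp
  apply le_antisymm
  · apply Finset.sup'_le
    rintro ⟨c, d⟩ hp
    have hcd : c ≠ d := by simpa [pairsO] using hp
    rw [Vv_eq, Vv_eq]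
    have hpos : (0:ℝ) ≤ min (val k a) (val k b) :=
      le_min (val_pos a).le (val_pos b).le
    by_cases hc : c ∈ ({a, b} : Finset (Om k))
    · by_cases hd : d ∈ ({a, b} : Finset (Om k))
      · rw [if_pos hc, if_pos hd]
        rw [hmem] at hc hd
        rcases hc with rfl | rfl <;> rcases hd with rfl | rfl
        · exact absurd rfl hcd
        · exact le_refl _
        · rw [min_comm]
        · exact absurd rfl hcd
      · rw [if_neg hd]
        exact le_trans (min_le_right _ _) hpos
    · rw [if_neg hc]
      exact le_trans (min_le_left _ _) hpos
  · have hmemp : (a, b) ∈ pairsO k := by simp [pairsO, hab]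
    have := Finset.le_sup' (f := fun p : Om k × Om k => min (Vv k p.1 ({a,b}:Finset (Om k))) (Vv k p.2 ({a,b}:Finset (Om k)))) hmemp
    refine le_trans ?_ this
    rw [Vv_eq, Vv_eq, if_pos (by simp), if_pos (by simp)]

def negO {k : ℕ} (ω : Om k) : Om k := fun i => if ω i = 0 then 1 else 0

lemma fin2 : ∀ a : Fin 2, a = 0 ∨ a = 1 := by decide

lemma negO_negO {k : ℕ} (ω : Om k) : negO (negO ω) = ω := by
  funext i
  unfold negO
  rcases fin2 (ω i) with h | h <;> simp [h]

lemma negO_apply_ne {k : ℕ} (ω : Om k) (i : Fin k) : ω i ≠ negO ω i := by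
  unfold negO
  rcases fin2 (ω i) with h | h <;> simp [h]

lemma negO_z0 {k : ℕ} : negO (fun _ => 0 : Om k) = fun _ => 1 := by
  funext i; simp [negO]

lemma negO_z1 {k : ℕ} : negO (fun _ => 1 : Om k) = fun _ => 0 := by
  funext i; simp [negO]

def idx0 {k : ℕ} (hk : 2 ≤ k) : Fin k := ⟨0, by omega⟩

def SS {k : ℕ} (hk : 2 ≤ k) : Finset (Om k) := Finset.univ.filter fun ω => ω (idx0 hk) = 0

lemma mem_SS {k : ℕ} (hk : 2 ≤ k) {ω : Om k} : ω ∈ SS hk ↔ ω (idx0 hk) = 0 := by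
  simp [SS]

lemma negO_idx0 {k : ℕ} (hk : 2 ≤ k) {ω : Om k} (h : ω ∈ SS hk) : negO ω (idx0 hk) = 1 := by
  rw [mem_SS hk] at h
  simp [negO, h]

lemma SS_card {k : ℕ} (hk : 2 ≤ k) : (SS hk).card * 2 = 2 ^ k := by
  classical
  have hbij : (SS hk).card = (Finset.univ.filter fun ω : Om k => ¬ ω (idx0 hk) = 0).card := by
    apply Finset.card_bij' (fun ω _ => negO ω) (fun ω _ => negO ω)
    · intro ω hω
      rw [mem_SS hk] at hω
      simp [negO, Finset.mem_filter, hω]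
    · intro ω hω
      simp only [Finset.mem_filter, Finset.mem_univ, true_and] at hω
      rw [mem_SS hk]
      rcases fin2 (ω (idx0 hk)) with h | h
      · exact absurd h hω
      · simp [negO, h]
    · intro ω _; exact negO_negO ω
    · intro ω _; exact negO_negO ω
  have hadd := Finset.card_filter_add_card_filter_not
    (s := (Finset.univ : Finset (Om k))) (p := fun ω => ω (idx0 hk) = 0)
  have huniv : (Finset.univ : Finset (Om k)).card = 2 ^ k := by
    simp [Finset.card_univ]
  simp only [SS] at hbij ⊢
  rw [huniv] at hadd
  rw [← hbij] at hadd
  linarith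

lemma SS_card_real {k : ℕ} (hk : 2 ≤ k) : ((SS hk).card : ℝ) = (2:ℝ) ^ k / 2 := by
  have := SS_card hk
  have : ((SS hk).card : ℝ) * 2 = (2:ℝ) ^ k := by exact_mod_cast congrArg (Nat.cast : ℕ → ℝ) this
  linarith

lemma z0_mem_SS {k : ℕ} (hk : 2 ≤ k) : (fun _ => 0 : Om k) ∈ SS hk := by
  rw [mem_SS hk]

lemma sp_pair_val {k : ℕ} (hk : 2 ≤ k) {ω : Om k} (hω : ω ∈ SS hk) :
    sp hk ({ω, negO ω} : Finset (Om k)) = if ω = (fun _ => 0) then (2:ℝ)^k/2 else 1 := by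
  have hne : ω ≠ negO ω := fun h => negO_apply_ne ω (idx0 hk) (congrFun h (idx0 hk))
  rw [sp_pair hk hne]
  by_cases h0 : ω = (fun _ => 0 : Om k)
  · subst h0
    rw [if_pos rfl, negO_z0]
    have : val k (fun _ => 0 : Om k) = (2:ℝ)^k/2 := by unfold val; rw [if_pos (Or.inl rfl)]
    have h1 : val k (fun _ => 1 : Om k) = (2:ℝ)^k/2 := by unfold val; rw [if_pos (Or.inr rfl)]
    rw [this, h1, min_self]
  · rw [if_neg h0]
    have hω0 : ω (idx0 hk) = 0 := (mem_SS hk).mp hω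
    have hω1 : ω ≠ (fun _ => 1 : Om k) := by
      intro h; rw [h] at hω0; simp at hω0
    have hn0 : negO ω ≠ (fun _ => 0 : Om k) := by
      intro h
      have := congrFun h (idx0 hk)
      rw [negO_idx0 hk hω] at this
      simp at this
    have hn1 : negO ω ≠ (fun _ => 1 : Om k) := by
      intro h
      have := congrArg negO h
      rw [negO_negO, negO_z1] at this
      exact h0 this
    rw [val_nonspecial h0 hω1, val_nonspecial hn0 hn1, min_self]


/-- In the separating instance, the maximum of `∑_{B ∈ F} 2(B)` over finite families of
pairwise disjoint nonempty subsets of `Ω` (arbitrary clustering) equals `m - 1`; in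
particular it is attained by bundling the all-zeros and all-ones instantiations together
and pairing up the remaining `m - 2` instantiations. -/
theorem stmt15 (k : ℕ) (hk : 2 ≤ k) :
    (∀ F : Finset (Finset (Om k)),
        (∀ B ∈ F, B.Nonempty) →
        (∀ B ∈ F, ∀ B' ∈ F, B ≠ B' → Disjoint B B') →
        ∑ B ∈ F, sp hk B ≤ (2 ^ k : ℝ) - 1) ∧
    (∃ F : Finset (Finset (Om k)),
        (∀ B ∈ F, B.Nonempty) ∧
        (∀ B ∈ F, ∀ B' ∈ F, B ≠ B' → Disjoint B B') ∧
        ({(fun _ => 0), (fun _ => 1)} : Finset (Om k)) ∈ F ∧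
        (∀ B ∈ F, B.card = 2) ∧
        F.biUnion id = Finset.univ ∧
        ∑ B ∈ F, sp hk B = (2 ^ k : ℝ) - 1) := by
  classical
  have h1 : (1:ℝ) ≤ (2:ℝ)^k/2 := one_le_half hk
  constructor
  · -- upper bound
    intro F hne hdisj
    have step1 : ∑ B ∈ F, sp hk B ≤
        ∑ B ∈ F, (((2:ℝ)^k/2 - 1) *
          (if ((fun _ => 0) ∈ B ∧ (fun _ => 1) ∈ B) then 1 else 0) + (B.card : ℝ)/2) :=
      Finset.sum_le_sum fun B _ => sp_le hk B
    have hindsum : ∑ B ∈ F, (if ((fun _ => 0) ∈ B ∧ (fun _ => 1) ∈ B) then (1:ℝ) else 0) ≤ 1 := by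
      have hle : ∀ B ∈ F, (if ((fun _ => 0) ∈ B ∧ (fun _ => 1) ∈ B) then (1:ℝ) else 0)
          ≤ (if ((fun _ => 0) : Om k) ∈ B then (1:ℝ) else 0) := by
        intro B _
        split_ifs with ha hb
        · norm_num
        · exact absurd ha.1 hb
        · norm_num
        · norm_num
      refine le_trans (Finset.sum_le_sum hle) ?_
      rw [Finset.sum_boole]
      have hcard1 : (F.filter fun B => ((fun _ => 0) : Om k) ∈ B).card ≤ 1 := by
        apply Finset.card_le_one.mpr
        intro B hB B' hB'
        simp only [Finset.mem_filter] at hB hB'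
        by_contra hne'
        exact Finset.disjoint_left.mp (hdisj B hB.1 B' hB'.1 hne') hB.2 hB'.2
      exact_mod_cast hcard1
    have hcardsum : ∑ B ∈ F, (B.card : ℝ) ≤ (2:ℝ)^k := by
      have hsum := Finset.card_biUnion (s := F) (t := id) (fun B hB B' hB' h => hdisj B hB B' hB' h)
      simp only [id_eq] at hsum
      have hle : (F.biUnion id).card ≤ 2 ^ k := by
        have := Finset.card_le_card (Finset.subset_univ (F.biUnion id))
        simpa [Finset.card_univ] using this
      have : ∑ B ∈ F, B.card ≤ 2 ^ k := by omega
      calc ∑ B ∈ F, (B.card : ℝ) = ((∑ B ∈ F, B.card : ℕ) : ℝ) := by push_cast; ring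
        _ ≤ ((2 ^ k : ℕ) : ℝ) := by exact_mod_cast this
        _ = (2:ℝ)^k := by push_cast; ring
    have hindnonneg : (0:ℝ) ≤ ∑ B ∈ F, (if ((fun _ => 0) ∈ B ∧ (fun _ => 1) ∈ B) then (1:ℝ) else 0) := by
      apply Finset.sum_nonneg
      intro B _
      split <;> norm_num
    calc ∑ B ∈ F, sp hk B
        ≤ ∑ B ∈ F, (((2:ℝ)^k/2 - 1) *
            (if ((fun _ => 0) ∈ B ∧ (fun _ => 1) ∈ B) then 1 else 0) + (B.card : ℝ)/2) := step1
      _ = ((2:ℝ)^k/2 - 1) * (∑ B ∈ F, (if ((fun _ => 0) ∈ B ∧ (fun _ => 1) ∈ B) then (1:ℝ) else 0))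
          + (∑ B ∈ F, (B.card : ℝ))/2 := by
          rw [Finset.sum_add_distrib, Finset.mul_sum, Finset.sum_div]
      _ ≤ ((2:ℝ)^k/2 - 1) * 1 + (2:ℝ)^k/2 := by
          have h0 : (0:ℝ) ≤ (2:ℝ)^k/2 - 1 := by linarith
          have := mul_le_mul_of_nonneg_left hindsum h0
          linarith
      _ = (2:ℝ)^k - 1 := by ring
  · -- the attaining family
    have hneq : ∀ ω : Om k, ω ≠ negO ω :=
      fun ω h => negO_apply_ne ω (idx0 hk) (congrFun h (idx0 hk))
    have hinj : ∀ ω ∈ SS hk, ∀ ω' ∈ SS hk,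
        ({ω, negO ω} : Finset (Om k)) = {ω', negO ω'} → ω = ω' := by
      intro ω hω ω' hω' heq
      have hmem : ω ∈ ({ω', negO ω'} : Finset (Om k)) := by
        rw [← heq]; simp
      simp only [Finset.mem_insert, Finset.mem_singleton] at hmem
      rcases hmem with h | h
      · exact h
      · exfalso
        have h0 : ω (idx0 hk) = 0 := (mem_SS hk).mp hω
        rw [h, negO_idx0 hk hω'] at h0
        exact absurd h0 (by decide)
    refine ⟨(SS hk).image (fun ω => ({ω, negO ω} : Finset (Om k))), ?_, ?_, ?_, ?_, ?_, ?_⟩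
    · -- nonempty
      intro B hB
      obtain ⟨ω, _, rfl⟩ := Finset.mem_image.mp hB
      exact ⟨ω, by simp⟩
    · -- pairwise disjoint
      intro B hB B' hB' hBB'
      obtain ⟨ω, hω, rfl⟩ := Finset.mem_image.mp hB
      obtain ⟨ω', hω', rfl⟩ := Finset.mem_image.mp hB'
      rw [Finset.disjoint_left]
      intro x hx hx'
      simp only [Finset.mem_insert, Finset.mem_singleton] at hx hx'
      have h0 : ω (idx0 hk) = 0 := (mem_SS hk).mp hω
      have h0' : ω' (idx0 hk) = 0 := (mem_SS hk).mp hω'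
      have hωω' : ω ≠ ω' := fun h => hBB' (by rw [h])
      rcases hx with rfl | rfl <;> rcases hx' with h | h
      · exact hωω' h
      · rw [h, negO_idx0 hk hω'] at h0
        exact absurd h0 (by decide)
      · rw [← h, negO_idx0 hk hω] at h0'
        exact absurd h0' (by decide)
      · exact hωω' (by rw [← negO_negO ω, h, negO_negO])
    · -- {z0, z1} ∈ F
      apply Finset.mem_image.mpr
      refine ⟨(fun _ => 0 : Om k), z0_mem_SS hk, ?_⟩
      rw [negO_z0]
    · -- cards
      intro B hB
      obtain ⟨ω, _, rfl⟩ := Finset.mem_image.mp hB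
      rw [Finset.card_insert_of_notMem (by simpa using hneq ω), Finset.card_singleton]
    · -- biUnion = univ
      apply Finset.eq_univ_of_forall
      intro x
      rw [Finset.mem_biUnion]
      by_cases hx : x (idx0 hk) = 0
      · exact ⟨{x, negO x}, Finset.mem_image_of_mem _ ((mem_SS hk).mpr hx), by simp⟩
      · refine ⟨{negO x, negO (negO x)}, Finset.mem_image_of_mem _ ?_, ?_⟩
        · rw [mem_SS hk]
          rcases fin2 (x (idx0 hk)) with h | h
          · exact absurd h hx
          · simp [negO, h]
        · rw [negO_negO]; simp
    · -- the sum
      rw [Finset.sum_image hinj]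
      have hcong : ∀ ω ∈ SS hk, sp hk ({ω, negO ω} : Finset (Om k))
          = 1 + (if ω = (fun _ => 0) then (2:ℝ)^k/2 - 1 else 0) := by
        intro ω hω
        rw [sp_pair_val hk hω]
        split <;> ring
      rw [Finset.sum_congr rfl hcong, Finset.sum_add_distrib, Finset.sum_const,
        Finset.sum_ite_eq' (SS hk) (fun _ => 0 : Om k) (fun _ => (2:ℝ)^k/2 - 1),
        if_pos (z0_mem_SS hk)]
      have := SS_card_real hk
      rw [nsmul_eq_mul, this]
      ring
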